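/- For finitely supported real sequences b = {b_I} and β = {β_J}, with σ independent uniform ±1 random signs, the averaged operator norm of the composition P^{0,1}_b P^{σ,0,0}_β satisfies the exact equality ‖P^{0,1}_b P^{σ,0,0}_β‖_{E,2→2} = sup_{J∈𝒟} [ (β_J²/|J|) Σ_{I∈𝒟, I⊊J} b_I² |I| ]^{1/2}. -/

import Mathlib

/-!
The signs `σ_J` are orthonormal in `L²(μ)` and the Haar functions are orthonormal in `L²(ℝ)`,
so averaging over `σ` diagonalizes the operator:
`𝔼 ‖P^{0,1}_b P^{σ,0,0}_β f‖₂² = ∑_J ⟨f, h_J⟩² β_J² ∑_I b_I² ⟨h_J, h¹_I⟩²`,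
and `⟨h_J, h¹_I⟩² = |I| / |J|` if `I ⊊ J` (where `h_J` is constant on `I`) and `0` otherwise.
For a unit vector `f` Bessel's inequality bounds this by the largest weight, and `f = h_J`
attains the weight of `J`.
-/

open MeasureTheory ProbabilityTheory Real Filter
open scoped ENNReal

attribute [local instance] Classical.propDecidable

noncomputable section

namespace RandomParaproducts

/-- Dyadic intervals: `(n, k)` represents `[k·2ⁿ, (k+1)·2ⁿ)`. -/
abbrev D : Type := ℤ × ℤ

/-- The length `2ⁿ` of the dyadic interval `(n, k)`. -/
def len (I : D) : ℝ := (2 : ℝ) ^ I.1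

/-- The dyadic interval `[k·2ⁿ, (k+1)·2ⁿ)` as a subset of `ℝ`. -/
def ival (I : D) : Set ℝ := Set.Ico ((I.2 : ℝ) * (2 : ℝ) ^ I.1) (((I.2 : ℝ) + 1) * (2 : ℝ) ^ I.1)

/-- The left half of a dyadic interval. -/
def lc (I : D) : D := (I.1 - 1, 2 * I.2)

/-- The right half of a dyadic interval. -/
def rc (I : D) : D := (I.1 - 1, 2 * I.2 + 1)

/-- The `L²`-normalized Haar function `h_I = h⁰_I`. -/
def haar (I : D) : ℝ → ℝ := fun x =>
  (Real.sqrt (len I))⁻¹ *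
    ((ival (rc I)).indicator (fun _ => (1 : ℝ)) x - (ival (lc I)).indicator (fun _ => (1 : ℝ)) x)

/-- The function `h¹_I = |h_I| = |I|^{-1/2} 1_I`. -/
def haar1 (I : D) : ℝ → ℝ := fun x =>
  (Real.sqrt (len I))⁻¹ * (ival I).indicator (fun _ => (1 : ℝ)) x

/-- `h^ε_I`, where `false` codes the exponent `0` and `true` codes the exponent `1`. -/
def hfun : Bool → D → ℝ → ℝ
  | false => haar
  | true => haar1

/-- The inner product `⟨f, g⟩ = ∫ f g` on `L²(ℝ)`. -/
def ip (f g : ℝ → ℝ) : ℝ := ∫ x, f x * g x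

/-- The paraproduct `P^{ε,δ}_b f = ∑_I b_I ⟨f, h^δ_I⟩ h^ε_I` with finitely supported
numerical symbol `b`. -/
def P (e d : Bool) (b : D →₀ ℝ) (f : ℝ → ℝ) : ℝ → ℝ := fun x =>
  ∑ I ∈ b.support, b I * ip f (hfun d I) * hfun e I x

/-- The signed paraproduct `P^{σ,ε,δ}_b f = ∑_I σ_I b_I ⟨f, h^δ_I⟩ h^ε_I`. -/
def Psig (σ : D → ℝ) (e d : Bool) (b : D →₀ ℝ) (f : ℝ → ℝ) : ℝ → ℝ := fun x =>
  ∑ I ∈ b.support, σ I * (b I * ip f (hfun d I) * hfun e I x)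

/-- The square of the `L²(ℝ)` norm, `‖g‖₂² = ∫ g²`. -/
def l2normSq (g : ℝ → ℝ) : ℝ := ∫ x, (g x) ^ 2

/-- The Carleson norm of a sequence `a` whose nonzero entries lie in the finite set `s`:
`sup_J (|J|⁻¹ ∑_{I ⊆ J} a_I² |I|)^{1/2}`. -/
def carlOn (s : Finset D) (a : D → ℝ) : ℝ :=
  ⨆ J : D, Real.sqrt ((len J)⁻¹ *
    ∑ I ∈ s.filter (fun I => ival I ⊆ ival J), (a I) ^ 2 * len I)

/-- `μ` is the law of independent uniformly distributed random signs `{σ_I : I ∈ 𝒟}`. -/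
def IsSignMeasure (μ : Measure (D → ℝ)) : Prop :=
  IsProbabilityMeasure μ ∧
    iIndepFun (m := fun _ : D => (inferInstance : MeasurableSpace ℝ)) (fun I σ => σ I) μ ∧
    ∀ I : D, μ.map (fun σ => σ I) =
      (2⁻¹ : ℝ≥0∞) • (Measure.dirac (1 : ℝ) + Measure.dirac (-1 : ℝ))

/-- `f` is a unit vector of `L²(ℝ)`. -/
def UnitL2 (f : ℝ → ℝ) : Prop := MemLp f 2 volume ∧ eLpNorm f 2 volume = 1

/-- The operator norm on `L²(ℝ)` of a map defined on functions. -/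
def opNorm (T : (ℝ → ℝ) → ℝ → ℝ) : ℝ :=
  ⨆ f : {f : ℝ → ℝ // UnitL2 f}, Real.sqrt (l2normSq (T f.1))

/-- The averaged operator norm `sup_{‖f‖₂ = 1} (𝔼 ‖T_σ f‖₂²)^{1/2}`. -/
def avgOpNorm (μ : Measure (D → ℝ)) (T : (D → ℝ) → (ℝ → ℝ) → ℝ → ℝ) : ℝ :=
  ⨆ f : {f : ℝ → ℝ // UnitL2 f}, Real.sqrt (∫ σ, l2normSq (T σ f.1) ∂μ)

/-- `b` is the finite linear combination of Haar functions with coefficients `c`. -/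
def FinHaar (b : ℝ → ℝ) (c : D →₀ ℝ) : Prop :=
  b = fun x => ∑ I ∈ c.support, c I * haar I x

/-- The paraproduct `P^{ε,γ}_{b,α} f = ∑_{I} (⟨b, h^α_I⟩/|I|^{1/2}) ⟨f, h^γ_I⟩ h^ε_I` with
function symbol `b`, the sum extended over a finite set `s` containing all the
nonvanishing terms. -/
def Pb (s : Finset D) (e g a : Bool) (b : ℝ → ℝ) (f : ℝ → ℝ) : ℝ → ℝ := fun x =>
  ∑ I ∈ s, (ip b (hfun a I) / Real.sqrt (len I)) * ip f (hfun g I) * hfun e I x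

lemma measurableSet_ival (I : D) : MeasurableSet (ival I) := measurableSet_Ico

lemma volume_ival_ne_top (I : D) : volume (ival I) ≠ ⊤ := by
  simp only [ival, Real.volume_Ico]; exact ENNReal.ofReal_ne_top

lemma memℒp_haar (I : D) : MemLp (haar I) 2 volume := by
  have h1 : MemLp ((ival (rc I)).indicator (fun _ => (1 : ℝ))) 2 volume :=
    memLp_indicator_const 2 (measurableSet_ival _) 1 (Or.inr (volume_ival_ne_top _))
  have h2 : MemLp ((ival (lc I)).indicator (fun _ => (1 : ℝ))) 2 volume :=
    memLp_indicator_const 2 (measurableSet_ival _) 1 (Or.inr (volume_ival_ne_top _))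
  exact ((h1.sub h2).const_mul ((Real.sqrt (len I))⁻¹))

/-- The Haar function `h_I` as an element of `L²(ℝ)`. -/
def haarLp (I : D) : Lp ℝ 2 (volume : Measure ℝ) := (memℒp_haar I).toLp (haar I)

/-- The random Haar multiplier `T_σ f = ∑_{I ∈ 𝒟} σ_I ⟨f, h_I⟩ h_I`, as an element of
`L²(ℝ)`; the (infinite) sum converges unconditionally in `L²`. -/
def Tfull (σ : D → ℝ) (g : ℝ → ℝ) : Lp ℝ 2 (volume : Measure ℝ) :=
  ∑' I : D, (σ I * ip g (haar I)) • haarLp I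

/-- The composition `M_b T_σ M_β` applied to `f`, as a function. -/
def MbTM (σ : D → ℝ) (b β f : ℝ → ℝ) : ℝ → ℝ := fun x =>
  b x * (Tfull σ fun y => β y * f y) x

lemma sq_sum_mul_eq_sum_sum {α ι : Type*} (f : ι → α → ℝ) (s : Finset ι) (c : ι → ℝ) (x : α) :
    (∑ i ∈ s, c i * f i x) ^ 2 = ∑ i ∈ s, ∑ j ∈ s, c i * c j * (f i x * f j x) := by
  rw [sq, Finset.sum_mul_sum]
  exact Finset.sum_congr rfl fun i _ => Finset.sum_congr rfl fun j _ => by ring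

section Orthonormal

variable {α ι : Type*} [MeasurableSpace α] {μ : Measure α} {f : ι → α → ℝ}

lemma integrable_sq_sum_mul (hint : ∀ i j, Integrable (fun x => f i x * f j x) μ)
    (s : Finset ι) (c : ι → ℝ) : Integrable (fun x => (∑ i ∈ s, c i * f i x) ^ 2) μ := by
  simp only [sq_sum_mul_eq_sum_sum]
  exact integrable_finsetSum _ fun i _ => integrable_finsetSum _ fun j _ =>
    (hint i j).const_mul _

lemma integral_sq_sum_mul_of_orthonormal [DecidableEq ι]
    (hint : ∀ i j, Integrable (fun x => f i x * f j x) μ)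
    (horth : ∀ i j, ∫ x, f i x * f j x ∂μ = if i = j then 1 else 0) (s : Finset ι) (c : ι → ℝ) :
    ∫ x, (∑ i ∈ s, c i * f i x) ^ 2 ∂μ = ∑ i ∈ s, c i ^ 2 := by
  simp only [sq_sum_mul_eq_sum_sum]
  rw [integral_finsetSum _ fun i _ => integrable_finsetSum _ fun j _ => (hint i j).const_mul _]
  refine Finset.sum_congr rfl fun i hi => ?_
  rw [integral_finsetSum _ fun j _ => (hint i j).const_mul _]
  simp only [integral_const_mul, horth, mul_ite, mul_one, mul_zero]
  rw [Finset.sum_ite_eq s i, if_pos hi, sq]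

end Orthonormal

lemma len_pos (I : D) : 0 < len I := zpow_pos two_pos _

lemma mem_ival_iff {I : D} {x : ℝ} : x ∈ ival I ↔ ⌊x / len I⌋ = I.2 := by
  rw [Int.floor_eq_iff, le_div_iff₀ (len_pos I), div_lt_iff₀ (len_pos I)]
  rfl

lemma floor_div_len_of_le {I J : D} (h : I.1 ≤ J.1) (x : ℝ) :
    ⌊x / len J⌋ = ⌊x / len I⌋ / 2 ^ (J.1 - I.1).toNat := by
  have hlen : len J = len I * ((2 ^ (J.1 - I.1).toNat : ℕ) : ℝ) := by
    rw [len, len, Nat.cast_pow, Nat.cast_ofNat, ← zpow_natCast, ← zpow_add₀ two_ne_zero,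
      Int.toNat_of_nonneg (by omega)]
    ring_nf
  rw [hlen, ← div_div, Int.floor_div_natCast]
  norm_cast

lemma ival_subset_of_le {I J : D} {x : ℝ} (h : I.1 ≤ J.1) (hxI : x ∈ ival I)
    (hxJ : x ∈ ival J) : ival I ⊆ ival J := by
  intro y hy
  rw [mem_ival_iff] at hxI hxJ hy ⊢
  rw [floor_div_len_of_le h, hy, ← hxI, ← floor_div_len_of_le h, hxJ]

lemma ival_trichotomy (I J : D) :
    ival I ⊆ ival J ∨ ival J ⊆ ival I ∨ Disjoint (ival I) (ival J) := by
  by_cases hdisj : Disjoint (ival I) (ival J)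
  · exact Or.inr (Or.inr hdisj)
  obtain ⟨x, hxI, hxJ⟩ := Set.not_disjoint_iff.mp hdisj
  rcases le_total I.1 J.1 with h | h
  · exact Or.inl (ival_subset_of_le h hxI hxJ)
  · exact Or.inr (Or.inl (ival_subset_of_le h hxJ hxI))

lemma volume_ival (I : D) : volume (ival I) = ENNReal.ofReal (len I) := by
  rw [ival, Real.volume_Ico, len]
  ring_nf

lemma measureReal_ival (I : D) : volume.real (ival I) = len I := by
  rw [measureReal_def, volume_ival, ENNReal.toReal_ofReal (len_pos I).le]

lemma left_mem_ival (I : D) : I.2 * len I ∈ ival I := by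
  rw [mem_ival_iff, mul_div_cancel_right₀ _ (len_pos I).ne', Int.floor_intCast]

lemma ival_injective : Function.Injective ival := by
  intro I J h
  have hlen : len I = len J := by
    rw [← measureReal_ival I, ← measureReal_ival J, h]
  have hx := h ▸ left_mem_ival I
  rw [mem_ival_iff, ← hlen, mul_div_cancel_right₀ _ (len_pos I).ne', Int.floor_intCast] at hx
  exact Prod.ext (zpow_right_injective₀ two_pos (by norm_num) hlen) hx

lemma len_lc (I : D) : len (lc I) = len I / 2 := by
  rw [len, len, lc, zpow_sub₀ two_ne_zero, zpow_one]

lemma len_rc (I : D) : len (rc I) = len I / 2 := len_lc I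

lemma ival_lc_union_rc (I : D) : ival (lc I) ∪ ival (rc I) = ival I := by
  ext x
  simp only [Set.mem_union, mem_ival_iff, show len (rc I) = len (lc I) from rfl,
    floor_div_len_of_le (show (lc I).1 ≤ I.1 by simp [lc]) x]
  simp only [lc, rc, sub_sub_cancel, Int.toNat_one, pow_one]
  omega

lemma disjoint_lc_rc (I : D) : Disjoint (ival (lc I)) (ival (rc I)) := by
  rw [Set.disjoint_left]
  intro x hl hr
  rw [mem_ival_iff] at hl hr
  rw [len_rc, ← len_lc, hl] at hr
  simp [lc, rc] at hr

lemma ival_lc_subset (I : D) : ival (lc I) ⊆ ival I :=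
  ival_lc_union_rc I ▸ Set.subset_union_left

lemma ival_rc_subset (I : D) : ival (rc I) ⊆ ival I :=
  ival_lc_union_rc I ▸ Set.subset_union_right

lemma subset_lc_or_rc_of_ssubset {I J : D} (h : ival I ⊂ ival J) :
    ival I ⊆ ival (lc J) ∨ ival I ⊆ ival (rc J) := by
  obtain ⟨x, hx⟩ : (ival I).Nonempty := ⟨_, left_mem_ival I⟩
  have hlt : I.1 < J.1 := by
    by_contra! hle
    exact h.not_subset (ival_subset_of_le hle (h.subset hx) hx)
  have hle : I.1 ≤ J.1 - 1 := by omega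
  rcases (ival_lc_union_rc J).symm.subset (h.subset hx) with hxl | hxr
  · exact Or.inl (ival_subset_of_le hle hx hxl)
  · exact Or.inr (ival_subset_of_le hle hx hxr)

lemma ip_comm (f g : ℝ → ℝ) : ip f g = ip g f := by
  simp only [ip, mul_comm]

lemma integrable_indicator_ival (I : D) (c : ℝ) : Integrable ((ival I).indicator fun _ => c) :=
  (integrable_indicator_iff (measurableSet_ival I)).2 (integrableOn_const (volume_ival_ne_top I))

lemma integrable_haar (I : D) : Integrable (haar I) :=
  ((integrable_indicator_ival _ 1).sub (integrable_indicator_ival _ 1)).const_mul _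

lemma setIntegral_haar (J : D) (A : Set ℝ) :
    ∫ x in A, haar J x = (√(len J))⁻¹ *
      (volume.real (ival (rc J) ∩ A) - volume.real (ival (lc J) ∩ A)) := by
  simp only [haar]
  rw [integral_const_mul, integral_sub (integrable_indicator_ival _ 1).integrableOn
    (integrable_indicator_ival _ 1).integrableOn, integral_indicator_const _ (measurableSet_ival _),
    integral_indicator_const _ (measurableSet_ival _),
    measureReal_restrict_apply (measurableSet_ival _),
    measureReal_restrict_apply (measurableSet_ival _), smul_eq_mul, smul_eq_mul, mul_one, mul_one]

lemma setIntegral_haar_of_subset_rc {J : D} {A : Set ℝ} (h : A ⊆ ival (rc J)) :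
    ∫ x in A, haar J x = (√(len J))⁻¹ * volume.real A := by
  rw [setIntegral_haar, Set.inter_eq_right.2 h,
    Set.disjoint_iff_inter_eq_empty.mp ((disjoint_lc_rc J).mono_right h)]
  simp

lemma setIntegral_haar_of_subset_lc {J : D} {A : Set ℝ} (h : A ⊆ ival (lc J)) :
    ∫ x in A, haar J x = -((√(len J))⁻¹ * volume.real A) := by
  rw [setIntegral_haar, Set.inter_eq_right.2 h,
    Set.disjoint_iff_inter_eq_empty.mp ((disjoint_lc_rc J).symm.mono_right h)]
  simp

lemma setIntegral_haar_of_superset {J : D} {A : Set ℝ} (h : ival J ⊆ A) :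
    ∫ x in A, haar J x = 0 := by
  rw [setIntegral_haar, Set.inter_eq_left.2 ((ival_rc_subset J).trans h),
    Set.inter_eq_left.2 ((ival_lc_subset J).trans h), measureReal_ival, measureReal_ival,
    len_rc, len_lc, sub_self, mul_zero]

lemma setIntegral_haar_of_disjoint {J : D} {A : Set ℝ} (h : Disjoint (ival J) A) :
    ∫ x in A, haar J x = 0 := by
  rw [setIntegral_haar, Set.disjoint_iff_inter_eq_empty.mp (h.mono_left (ival_rc_subset J)),
    Set.disjoint_iff_inter_eq_empty.mp (h.mono_left (ival_lc_subset J))]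
  simp

lemma sq_setIntegral_haar_of_ssubset {I J : D} (h : ival I ⊂ ival J) :
    (∫ x in ival I, haar J x) ^ 2 = len I ^ 2 / len J := by
  have hsq : ((√(len J))⁻¹ * len I) ^ 2 = len I ^ 2 / len J := by
    rw [mul_pow, inv_pow, Real.sq_sqrt (len_pos J).le, inv_mul_eq_div]
  rcases subset_lc_or_rc_of_ssubset h with hl | hr
  · rw [setIntegral_haar_of_subset_lc hl, measureReal_ival, neg_sq, hsq]
  · rw [setIntegral_haar_of_subset_rc hr, measureReal_ival, hsq]

lemma setIntegral_haar_of_not_ssubset {I J : D} (h : ¬ ival I ⊂ ival J) :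
    ∫ x in ival I, haar J x = 0 := by
  rcases ival_trichotomy I J with hIJ | hJI | hdisj
  · exact setIntegral_haar_of_superset
      (not_not.mp fun hJI => h (ssubset_of_subset_not_subset hIJ hJI))
  · exact setIntegral_haar_of_superset hJI
  · exact setIntegral_haar_of_disjoint hdisj.symm

lemma ip_haar1 (f : ℝ → ℝ) (I : D) : ip f (haar1 I) = (√(len I))⁻¹ * ∫ x in ival I, f x := by
  rw [ip, ← integral_indicator (measurableSet_ival I), ← integral_const_mul]
  congr 1 with x
  by_cases hx : x ∈ ival I <;> simp [haar1, hx, mul_comm]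

lemma sq_ip_haar_haar1 (J I : D) :
    ip (haar J) (haar1 I) ^ 2 = if ival I ⊂ ival J then len I / len J else 0 := by
  rw [ip_haar1, mul_pow, inv_pow, Real.sq_sqrt (len_pos I).le]
  split_ifs with h
  · rw [sq_setIntegral_haar_of_ssubset h]
    field_simp [(len_pos I).ne']
  · rw [setIntegral_haar_of_not_ssubset h]
    ring

lemma ip_haar {f : ℝ → ℝ} (hf : Integrable f) (J : D) :
    ip f (haar J) = (√(len J))⁻¹ *
      ((∫ x in ival (rc J), f x) - ∫ x in ival (lc J), f x) := by
  rw [ip, ← integral_indicator (measurableSet_ival _), ← integral_indicator (measurableSet_ival _),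
    ← integral_sub (hf.indicator (measurableSet_ival _)) (hf.indicator (measurableSet_ival _)),
    ← integral_const_mul]
  congr 1 with x
  by_cases hr : x ∈ ival (rc J) <;> by_cases hl : x ∈ ival (lc J) <;> simp [haar, hr, hl, mul_comm]

lemma ip_haar_self (I : D) : ip (haar I) (haar I) = 1 := by
  rw [ip_haar (integrable_haar I), setIntegral_haar_of_subset_rc subset_rfl,
    setIntegral_haar_of_subset_lc subset_rfl, measureReal_ival, measureReal_ival, len_rc, len_lc]
  have hsq : (√(len I))⁻¹ ^ 2 * len I = 1 := by
    rw [inv_pow, Real.sq_sqrt (len_pos I).le, inv_mul_cancel₀ (len_pos I).ne']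
  linear_combination hsq

lemma ip_haar_haar_of_ssubset {I J : D} (h : ival I ⊂ ival J) : ip (haar I) (haar J) = 0 := by
  rw [ip_haar (integrable_haar I)]
  rcases subset_lc_or_rc_of_ssubset h with hl | hr
  · rw [setIntegral_haar_of_disjoint ((disjoint_lc_rc J).mono_left hl),
      setIntegral_haar_of_superset hl, sub_zero, mul_zero]
  · rw [setIntegral_haar_of_superset hr,
      setIntegral_haar_of_disjoint ((disjoint_lc_rc J).symm.mono_left hr), sub_zero, mul_zero]

lemma ip_haar_haar_of_disjoint {I J : D} (h : Disjoint (ival I) (ival J)) :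
    ip (haar I) (haar J) = 0 := by
  rw [ip_haar (integrable_haar I), setIntegral_haar_of_disjoint (h.mono_right (ival_rc_subset J)),
    setIntegral_haar_of_disjoint (h.mono_right (ival_lc_subset J)), sub_zero, mul_zero]

lemma ip_haar_haar (I J : D) : ip (haar I) (haar J) = if I = J then 1 else 0 := by
  rcases eq_or_ne I J with rfl | hne
  · rw [if_pos rfl, ip_haar_self]
  rw [if_neg hne]
  have hne' : ival I ≠ ival J := ival_injective.ne hne
  rcases ival_trichotomy I J with h | h | h
  · exact ip_haar_haar_of_ssubset (h.ssubset_of_ne hne')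
  · rw [ip_comm]
    exact ip_haar_haar_of_ssubset (h.ssubset_of_ne hne'.symm)
  · exact ip_haar_haar_of_disjoint h

lemma integrable_haar_mul_haar (I J : D) : Integrable (fun x => haar I x * haar J x) :=
  (memℒp_haar I).integrable_mul (memℒp_haar J)

lemma l2normSq_sum_haar (s : Finset D) (c : D → ℝ) :
    l2normSq (fun x => ∑ I ∈ s, c I * haar I x) = ∑ I ∈ s, c I ^ 2 :=
  integral_sq_sum_mul_of_orthonormal integrable_haar_mul_haar ip_haar_haar s c

lemma inner_haarLp_toLp {f : ℝ → ℝ} (hf : MemLp f 2 volume) (J : D) :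
    inner ℝ (haarLp J) (hf.toLp f) = ip f (haar J) := by
  rw [L2.inner_def, ip]
  refine integral_congr_ae ?_
  filter_upwards [(memℒp_haar J).coeFn_toLp, hf.coeFn_toLp] with x hJ hx
  rw [haarLp, hJ, hx, RCLike.inner_apply, conj_trivial, mul_comm]

lemma orthonormal_haarLp : Orthonormal ℝ haarLp := by
  rw [orthonormal_iff_ite]
  intro I J
  rw [show haarLp J = (memℒp_haar J).toLp (haar J) from rfl, inner_haarLp_toLp, ip_comm,
    ip_haar_haar]

lemma sum_sq_ip_haar_le_one {f : ℝ → ℝ} (hf : UnitL2 f) (t : Finset D) :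
    ∑ J ∈ t, ip f (haar J) ^ 2 ≤ 1 := by
  have hnorm : ‖hf.1.toLp f‖ = 1 := by
    rw [Lp.norm_toLp, hf.2, ENNReal.toReal_one]
  simpa [inner_haarLp_toLp hf.1, hnorm] using
    orthonormal_haarLp.sum_inner_products_le (hf.1.toLp f) (s := t)

lemma unitL2_haar (J : D) : UnitL2 (haar J) := by
  refine ⟨memℒp_haar J, ?_⟩
  have hnorm : ‖haarLp J‖ = 1 := orthonormal_haarLp.1 J
  rwa [haarLp, Lp.norm_toLp, ENNReal.toReal_eq_one_iff] at hnorm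

namespace IsSignMeasure

variable {μ : Measure (D → ℝ)}

lemma integral_comp_eval (hμ : IsSignMeasure μ) (J : D) {g : ℝ → ℝ} (hg : Continuous g) :
    ∫ σ, g (σ J) ∂μ = (g 1 + g (-1)) / 2 := by
  rw [← integral_map (measurable_pi_apply J).aemeasurable hg.aestronglyMeasurable, hμ.2.2 J,
    integral_smul_measure, integral_add_measure (integrable_dirac enorm_lt_top)
      (integrable_dirac enorm_lt_top), integral_dirac, integral_dirac]
  simp [div_eq_inv_mul]

lemma integrable_comp_eval (hμ : IsSignMeasure μ) (J : D) {g : ℝ → ℝ} (hg : Continuous g) :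
    Integrable (fun σ => g (σ J)) μ := by
  refine (integrable_map_measure hg.aestronglyMeasurable
    (measurable_pi_apply J).aemeasurable).1 ?_
  rw [hμ.2.2 J]
  exact ((integrable_dirac enorm_lt_top).add_measure (integrable_dirac enorm_lt_top)).smul_measure
    (by simp)

lemma integrable_eval_mul_eval (hμ : IsSignMeasure μ) (J K : D) :
    Integrable (fun σ => σ J * σ K) μ := by
  rcases eq_or_ne J K with rfl | hJK
  · simpa [sq] using hμ.integrable_comp_eval J (continuous_pow 2)
  · exact (hμ.2.1.indepFun hJK).integrable_mul (hμ.integrable_comp_eval J continuous_id)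
      (hμ.integrable_comp_eval K continuous_id)

lemma integral_eval_mul_eval (hμ : IsSignMeasure μ) (J K : D) :
    ∫ σ, σ J * σ K ∂μ = if J = K then 1 else 0 := by
  rcases eq_or_ne J K with rfl | hJK
  · simpa [sq] using hμ.integral_comp_eval J (continuous_pow 2)
  · rw [if_neg hJK, (hμ.2.1.indepFun hJK).integral_fun_mul_eq_mul_integral
      (measurable_pi_apply J).aestronglyMeasurable (measurable_pi_apply K).aestronglyMeasurable]
    simpa using Or.inl (hμ.integral_comp_eval J continuous_id)

lemma integrable_sq_sum_mul_eval (hμ : IsSignMeasure μ) (s : Finset D) (c : D → ℝ) :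
    Integrable (fun σ => (∑ J ∈ s, c J * σ J) ^ 2) μ :=
  integrable_sq_sum_mul hμ.integrable_eval_mul_eval s c

lemma integral_sq_sum_mul_eval (hμ : IsSignMeasure μ) (s : Finset D) (c : D → ℝ) :
    ∫ σ, (∑ J ∈ s, c J * σ J) ^ 2 ∂μ = ∑ J ∈ s, c J ^ 2 :=
  integral_sq_sum_mul_of_orthonormal hμ.integrable_eval_mul_eval hμ.integral_eval_mul_eval s c

end IsSignMeasure

lemma iSup_sqrt_eq_of_eq_sum_sq_ip_haar {F : (ℝ → ℝ) → ℝ} {t : Finset D} {R : D → ℝ}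
    (hR : ∀ J, 0 ≤ R J) (ht : ∀ J ∉ t, R J = 0)
    (hF : ∀ f, F f = ∑ J ∈ t, ip f (haar J) ^ 2 * R J) :
    ⨆ f : {f : ℝ → ℝ // UnitL2 f}, √(F f.1) = ⨆ J, √(R J) := by
  have hR_le_sum : ∀ J, R J ≤ ∑ K ∈ t, R K := by
    intro J
    by_cases hJ : J ∈ t
    · exact Finset.single_le_sum (fun K _ => hR K) hJ
    · exact (ht J hJ).trans_le (Finset.sum_nonneg fun K _ => hR K)
  have hbdd : BddAbove (Set.range fun J => √(R J)) :=
    ⟨_, Set.forall_mem_range.2 fun J => Real.sqrt_le_sqrt (hR_le_sum J)⟩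
  set S := ⨆ J, √(R J)
  have hS : 0 ≤ S := (Real.sqrt_nonneg _).trans (le_ciSup hbdd 0)
  have hRS : ∀ J, R J ≤ S ^ 2 := fun J => (Real.sqrt_le_left hS).1 (le_ciSup hbdd J)
  have hFS : ∀ f : {f : ℝ → ℝ // UnitL2 f}, √(F f.1) ≤ S := by
    refine fun f => (Real.sqrt_le_left hS).2 ?_
    calc F f.1 ≤ ∑ J ∈ t, ip f.1 (haar J) ^ 2 * S ^ 2 :=
          (hF f.1).trans_le (Finset.sum_le_sum fun J _ =>
            mul_le_mul_of_nonneg_left (hRS J) (sq_nonneg _))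
      _ = (∑ J ∈ t, ip f.1 (haar J) ^ 2) * S ^ 2 := Finset.sum_mul .. |>.symm
      _ ≤ S ^ 2 := mul_le_of_le_one_left (sq_nonneg S) (sum_sq_ip_haar_le_one f.2 t)
  have hF_haar : ∀ J, F (haar J) = R J := by
    intro J
    simp only [hF, ip_haar_haar, ite_pow, one_pow, ite_mul, one_mul, zero_pow two_ne_zero, zero_mul,
      Finset.sum_ite_eq]
    split_ifs with hJ
    · rfl
    · exact (ht J hJ).symm
  have : Nonempty {f : ℝ → ℝ // UnitL2 f} := ⟨⟨haar 0, unitL2_haar 0⟩⟩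
  refine le_antisymm (ciSup_le hFS) (ciSup_le fun J => ?_)
  rw [← hF_haar J]
  exact le_ciSup (f := fun f : {f : ℝ → ℝ // UnitL2 f} => √(F f.1))
    ⟨S, Set.forall_mem_range.2 hFS⟩ ⟨haar J, unitL2_haar J⟩

lemma integrable_haar_mul_haar1 (J I : D) : Integrable (fun x => haar J x * haar1 I x) :=
  (memℒp_haar J).integrable_mul <| (memLp_indicator_const 2 (measurableSet_ival I) 1
    (Or.inr (volume_ival_ne_top I))).const_mul _

lemma ip_Psig_haar1 (σ : D → ℝ) (β : D →₀ ℝ) (f : ℝ → ℝ) (I : D) :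
    ip (Psig σ false false β f) (haar1 I) =
      ∑ J ∈ β.support, β J * ip f (haar J) * ip (haar J) (haar1 I) * σ J := by
  have hpt : ∀ x, Psig σ false false β f x * haar1 I x =
      ∑ J ∈ β.support, σ J * β J * ip f (haar J) * (haar J x * haar1 I x) := fun x => by
    simp only [Psig, hfun, Finset.sum_mul]
    exact Finset.sum_congr rfl fun J _ => by ring
  simp only [ip, hpt]
  rw [integral_finsetSum _ fun J _ => (integrable_haar_mul_haar1 J I).const_mul _]
  exact Finset.sum_congr rfl fun J _ => by rw [integral_const_mul]; ring

lemma l2normSq_P_false_true (b : D →₀ ℝ) (g : ℝ → ℝ) :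
    l2normSq (P false true b g) = ∑ I ∈ b.support, (b I * ip g (haar1 I)) ^ 2 :=
  l2normSq_sum_haar _ _

lemma sum_sq_mul_sq_ip_haar_haar1 (b : D →₀ ℝ) (J : D) :
    ∑ I ∈ b.support, b I ^ 2 * ip (haar J) (haar1 I) ^ 2 =
      (∑ I ∈ b.support.filter (fun I => ival I ⊂ ival J), b I ^ 2 * len I) / len J := by
  rw [Finset.sum_filter, Finset.sum_div]
  refine Finset.sum_congr rfl fun I _ => ?_
  rw [sq_ip_haar_haar1]
  split_ifs <;> ring

def carlesonWeight (b β : D →₀ ℝ) (J : D) : ℝ :=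
  β J ^ 2 / len J * ∑ I ∈ b.support.filter (fun I => ival I ⊂ ival J), b I ^ 2 * len I

lemma carlesonWeight_nonneg (b β : D →₀ ℝ) (J : D) : 0 ≤ carlesonWeight b β J :=
  mul_nonneg (div_nonneg (sq_nonneg _) (len_pos J).le)
    (Finset.sum_nonneg fun I _ => mul_nonneg (sq_nonneg _) (len_pos I).le)

lemma integral_l2normSq_P_Psig (b β : D →₀ ℝ) {μ : Measure (D → ℝ)} (hμ : IsSignMeasure μ)
    (f : ℝ → ℝ) :
    ∫ σ, l2normSq (P false true b (Psig σ false false β f)) ∂μ =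
      ∑ J ∈ β.support, ip f (haar J) ^ 2 * carlesonWeight b β J := by
  simp only [l2normSq_P_false_true, ip_Psig_haar1, mul_pow]
  rw [integral_finsetSum _ fun I _ => (hμ.integrable_sq_sum_mul_eval _ _).const_mul _]
  simp only [integral_const_mul, hμ.integral_sq_sum_mul_eval, Finset.mul_sum]
  rw [Finset.sum_comm]
  refine Finset.sum_congr rfl fun J _ => ?_
  rw [carlesonWeight, div_mul_eq_mul_div, mul_div_assoc, ← sum_sq_mul_sq_ip_haar_haar1,
    Finset.mul_sum, Finset.mul_sum]
  exact Finset.sum_congr rfl fun I _ => by ring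

/-- Exact formula for the averaged operator norm of `P^{0,1}_b P^{σ,0,0}_β`. -/
theorem statement7 (b β : D →₀ ℝ) (μ : Measure (D → ℝ)) (hμ : IsSignMeasure μ) :
    avgOpNorm μ (fun σ f => P false true b (Psig σ false false β f)) =
      ⨆ J : D, Real.sqrt ((β J) ^ 2 / len J *
        ∑ I ∈ b.support.filter (fun I => ival I ⊂ ival J), (b I) ^ 2 * len I) :=
  iSup_sqrt_eq_of_eq_sum_sq_ip_haar (carlesonWeight_nonneg b β)
    (fun J hJ => by simp [carlesonWeight, Finsupp.notMem_support_iff.1 hJ])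
    (integral_l2normSq_P_Psig b β hμ)

end RandomParaproducts
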